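/- Let R be a binary tree with no computable path. Then there is no model of the L-theory T_R with underlying set ℕ in which the interpretations of S and P are computable functions ℕ → ℕ and the interpretation of A is a computable (decidable) predicate on ℕ. -/

import Mathlib

/-! In such a model the sequence `x n := A(Sⁿ 0)` is computable, being a computable predicate
composed with iterates of a computable function, and the `n`-th tree axiom says exactly that
`x↾n ∈ R`. So `x` would be a computable path through `R`. -/

open FirstOrder FirstOrder.Language

/-- The function symbols of the language `L`: a constant `0` and unary functions `S`, `P`. -/
inductive LFunc : ℕ → Type
  | zero : LFunc 0
  | succ : LFunc 1
  | pred : LFunc 1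

/-- The relation symbols of the language `L`: a unary relation `A`. -/
inductive LRel : ℕ → Type
  | A : LRel 1

/-- The first-order language with a constant symbol `0`, unary function symbols `S` and `P`,
and a unary relation symbol `A`. -/
def L : Language := ⟨LFunc, LRel⟩

/-- The reduct `L₀` of `L` without the relation symbol `A`. -/
def L₀ : Language := ⟨LFunc, fun _ => Empty⟩

/-- The inclusion of `L₀` into `L`. -/
def incl : L₀ →ᴸ L where
  onFunction := fun {_} f => f
  onRelation := fun {_} r => Empty.elim r

/-- `ℤ` as an `L₀`-structure, interpreting `0` as zero, `S` as successor, `P` as predecessor. -/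
instance intL0Structure : L₀.Structure ℤ where
  funMap := fun f v => match f with
    | .zero => 0
    | .succ => v 0 + 1
    | .pred => v 0 - 1
  RelMap := fun r _ => Empty.elim r

/-- The `L`-term `0`. -/
def zeroT {α : Type*} : L.Term α := Term.func LFunc.zero ![]

/-- The `L`-term `S t`. -/
def succT {α : Type*} (t : L.Term α) : L.Term α := Term.func LFunc.succ ![t]

/-- The `L`-term `P t`. -/
def predT {α : Type*} (t : L.Term α) : L.Term α := Term.func LFunc.pred ![t]

/-- The `L`-term `Sᵏ t`. -/
def iterST {α : Type*} (k : ℕ) (t : L.Term α) : L.Term α := succT^[k] t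

/-- The `L`-term `Pᵏ t`. -/
def iterPT {α : Type*} (k : ℕ) (t : L.Term α) : L.Term α := predT^[k] t

/-- The atomic `L`-formula `A t`. -/
def Aform {α : Type*} (t : L.Term α) : L.Formula α := Relations.formula LRel.A ![t]

/-- The old (2024) Mathlib `BoundedFormula.iSup`: disjunction of a finset-indexed family. -/
noncomputable def finsetISup {L : Language} {α : Type*} {β : Type*} {n : ℕ} (s : Finset β)
    (f : β → L.BoundedFormula α n) : L.BoundedFormula α n :=
  (s.toList.map f).foldr (· ⊔ ·) ⊥

/-- The old (2024) Mathlib `BoundedFormula.iInf`: conjunction of a finset-indexed family. -/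
noncomputable def finsetIInf {L : Language} {α : Type*} {β : Type*} {n : ℕ} (s : Finset β)
    (f : β → L.BoundedFormula α n) : L.BoundedFormula α n :=
  (s.toList.map f).foldr (· ⊓ ·) ⊤

/-- The sentence asserting that the truth values of `A(0), A(S0), …, A(Sⁿ⁻¹0)` follow the
pattern `σ`. -/
noncomputable def patternSentence (n : ℕ) (σ : Fin n → Bool) : L.Sentence :=
  finsetIInf Finset.univ fun i : Fin n =>
    if σ i then Aform (iterST i zeroT) else (Aform (iterST i zeroT)).not

/-- The `n`-th tree axiom for `R`: the disjunction, over all length-`n` strings `σ ∈ R`, of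
the sentence asserting that `A(0), …, A(Sⁿ⁻¹0)` follow the pattern `σ`. -/
noncomputable def treeAxiom (R : Set (List Bool)) (n : ℕ) : L.Sentence :=
  letI := Classical.decPred fun σ : Fin n → Bool => List.ofFn σ ∈ R
  finsetISup (Finset.univ.filter fun σ : Fin n → Bool => List.ofFn σ ∈ R)
    (patternSentence n)

/-- The theory `T_R`: all `L₀`-sentences true in `(ℤ, 0, succ, pred)`, together with the
tree axioms for `R`. -/
noncomputable def TR (R : Set (List Bool)) : L.Theory :=
  incl.onTheory (L₀.completeTheory ℤ) ∪ Set.range (treeAxiom R)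

/-- `R ⊆ List Bool` is a binary tree if it is closed under initial segments. -/
def IsBinaryTree (R : Set (List Bool)) : Prop :=
  ∀ σ ∈ R, ∀ τ : List Bool, τ <+: σ → τ ∈ R

/-- The length-`n` initial segment of an infinite binary sequence `x : ℕ → Bool`. -/
def initSeg (x : ℕ → Bool) (n : ℕ) : List Bool :=
  List.ofFn fun i : Fin n => x i

/-- The `L`-structure on `M` determined by interpretations `z` of `0`, `s` of `S`, `p` of `P`
and `a` of `A`. -/
def mkStructure {M : Type*} (z : M) (s p : M → M) (a : M → Prop) : L.Structure M where
  funMap := fun f v => match f with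
    | .zero => z
    | .succ => s (v 0)
    | .pred => p (v 0)
  RelMap := fun r v => match r with
    | .A => a (v 0)

section ComputableIterate

variable {β : Type*} [Primcodable β]

theorem Computable.iterate {s : β → β} (hs : Computable s) (b : β) :
    Computable fun n : ℕ => s^[n] b :=
  (Computable.nat_rec .id (.const b) (hs.comp (Computable.snd.comp .snd)).to₂).of_eq
    fun n => by
      induction n with
      | zero => rfl
      | succ n ih => rw [Function.iterate_succ_apply', ← ih]; rfl

end ComputableIterate

theorem realize_finsetISup {L : Language} {M : Type*} [L.Structure M] {α β : Type*} {n : ℕ}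
    (s : Finset β) (f : β → L.BoundedFormula α n) (v : α → M) (xs : Fin n → M) :
    (finsetISup s f).Realize v xs ↔ ∃ b ∈ s, (f b).Realize v xs := by
  simp [finsetISup, BoundedFormula.realize_foldr_sup]

theorem realize_finsetIInf {L : Language} {M : Type*} [L.Structure M] {α β : Type*} {n : ℕ}
    (s : Finset β) (f : β → L.BoundedFormula α n) (v : α → M) (xs : Fin n → M) :
    (finsetIInf s f).Realize v xs ↔ ∀ b ∈ s, (f b).Realize v xs := by
  simp [finsetIInf, BoundedFormula.realize_foldr_inf]

namespace mkStructure

variable {M : Type*} (z : M) (s p : M → M) (a : M → Prop)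

theorem realize_iterST_zeroT {α : Type*} (v : α → M) (k : ℕ) :
    @Term.realize L M (mkStructure z s p a) α v (iterST k zeroT) = s^[k] z := by
  induction k with
  | zero => rfl
  | succ k ih =>
    rw [iterST, Function.iterate_succ_apply', Function.iterate_succ_apply', ← ih]
    rfl

theorem realize_Aform_iterST_zeroT {α : Type*} (v : α → M) (k : ℕ) :
    @Formula.Realize L M (mkStructure z s p a) α (Aform (iterST k zeroT)) v ↔ a (s^[k] z) := by
  let := mkStructure z s p a
  show a (Term.realize _ _) ↔ _
  simp only [Term.realize_relabel, Matrix.cons_val_zero, realize_iterST_zeroT]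

theorem realize_patternSentence (n : ℕ) (σ : Fin n → Bool) :
    @Sentence.Realize L M (mkStructure z s p a) (patternSentence n σ) ↔
      ∀ i : Fin n, (a (s^[i] z) ↔ σ i = true) := by
  let := mkStructure z s p a
  simp only [Sentence.Realize, Formula.Realize, patternSentence, realize_finsetIInf,
    Finset.mem_univ, true_implies]
  refine forall_congr' fun i => ?_
  have := realize_Aform_iterST_zeroT z s p a (default : Empty → M) i
  cases σ i <;> simp_all [Formula.Realize]

theorem realize_treeAxiom (R : Set (List Bool)) (n : ℕ) :
    @Sentence.Realize L M (mkStructure z s p a) (treeAxiom R n) ↔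
      ∃ σ : Fin n → Bool, List.ofFn σ ∈ R ∧ ∀ i : Fin n, (a (s^[i] z) ↔ σ i = true) := by
  classical
  simp only [treeAxiom, Sentence.Realize, Formula.Realize, realize_finsetISup, Finset.mem_filter,
    Finset.mem_univ, true_and]
  exact exists_congr fun σ => and_congr_right fun _ => realize_patternSentence z s p a n σ

end mkStructure

theorem initSeg_iterate_mem_of_model_TR {M : Type*} {R : Set (List Bool)} {z : M} {s p : M → M}
    {a : M → Bool} (hM : @Theory.Model L M (mkStructure z s p fun m => a m = true) (TR R))
    (n : ℕ) : initSeg (fun k => a (s^[k] z)) n ∈ R := by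
  obtain ⟨σ, hσR, hσ⟩ := (mkStructure.realize_treeAxiom z s p _ R n).1
    (hM.realize_of_mem _ (Or.inr ⟨n, rfl⟩))
  have hpath : initSeg (fun k => a (s^[k] z)) n = List.ofFn σ :=
    congrArg List.ofFn (funext fun i => Bool.eq_iff_iff.2 (hσ i))
  exact hpath ▸ hσR

theorem no_computable_model_TR_general (R : Set (List Bool))
    (hNoPath : ∀ x : ℕ → Bool, (∀ n : ℕ, initSeg x n ∈ R) → ¬ Computable x) :
    ¬ ∃ (z : ℕ) (s p : ℕ → ℕ) (a : ℕ → Bool), Computable s ∧ Computable p ∧ Computable a ∧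
      @Theory.Model L ℕ (mkStructure z s p fun m => a m = true) (TR R) := by
  rintro ⟨z, s, p, a, hs, -, ha, hM⟩
  exact hNoPath _ (initSeg_iterate_mem_of_model_TR hM) (ha.comp (hs.iterate z))

/-- If `R` is a binary tree with no computable path, then there is no model of `T_R` with
underlying set `ℕ` in which the interpretations of `S` and `P` are computable functions and
the interpretation of `A` is a computable predicate. -/
theorem no_computable_model_TR (R : Set (List Bool)) (hTree : IsBinaryTree R)
    (hNoPath : ∀ x : ℕ → Bool, (∀ n : ℕ, initSeg x n ∈ R) → ¬ Computable x) :
    ¬ ∃ (z : ℕ) (s p : ℕ → ℕ) (a : ℕ → Bool), Computable s ∧ Computable p ∧ Computable a ∧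
      @Theory.Model L ℕ (mkStructure z s p fun m => a m = true) (TR R) :=
  no_computable_model_TR_general R hNoPath
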